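/- arXiv:2309.15423 — 5 statements merged into one kernel-verified Lean document; each statement's English description precedes it below -/
import Mathlib

section
/- Suppose each S_i is twice continuously differentiable, strictly increasing, and satisfies the strict monotonicity condition: for all -s_max ≤ q < q', (1 + q'/((N-1)d_min))·S_i'(q') < (1 + q/((N-1)d_min))·S_i'(q). Then the map q ↦ ∑_i S_i(q_i) is strictly concave on the feasible set {q ∈ ℝ^N : ∑_i q_i = 0, q_i ≥ -s_max ∀i}, and the welfare maximization problem max ∑_i S_i(q_i) over this set has a unique optimal solution. -/
open Set Finset

/-- under the strict monotonicity condition (8), the welfare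
`q ↦ ∑ᵢ Sᵢ(qᵢ)` is strictly concave on the feasible set
`{q : ∑ᵢ qᵢ = 0, qᵢ ≥ -s_max}` and the welfare maximization problem has a
unique optimal solution. -/
theorem stmt3 (N : ℕ) (hN : 2 ≤ N) (smax dmin : ℝ) (hs : 0 < smax) (hd : 0 < dmin)
    (S : Fin N → ℝ → ℝ) (hC2 : ∀ i, ContDiff ℝ 2 (S i)) (hmono : ∀ i, StrictMono (S i))
    (hcond : ∀ i, ∀ q q' : ℝ, -smax ≤ q → q < q' →
      (1 + q' / (((N : ℝ) - 1) * dmin)) * deriv (S i) q'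
        < (1 + q / (((N : ℝ) - 1) * dmin)) * deriv (S i) q) :
    StrictConcaveOn ℝ {q : Fin N → ℝ | ∑ i, q i = 0 ∧ ∀ i, -smax ≤ q i}
      (fun q => ∑ i, S i (q i)) ∧
    ∃! q : Fin N → ℝ, (∑ i, q i = 0 ∧ ∀ i, -smax ≤ q i) ∧
      ∀ q' : Fin N → ℝ, (∑ i, q' i = 0 ∧ ∀ i, -smax ≤ q' i) →
        ∑ i, S i (q' i) ≤ ∑ i, S i (q i) := by
  have hN1 : (1:ℝ) ≤ (N:ℝ) - 1 := by
    have : (2:ℝ) ≤ (N:ℝ) := by exact_mod_cast hN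
    linarith
  set c : ℝ := ((N:ℝ) - 1) * dmin with hc_def
  have hc : 0 < c := by nlinarith
  have hdiff : ∀ i, Differentiable ℝ (S i) := fun i => (hC2 i).differentiable (by norm_num)
  -- derivative is nonnegative
  have hS'0 : ∀ i q, 0 ≤ deriv (S i) q := by
    intro i q
    have h := (hdiff i q).hasDerivAt
    rw [hasDerivAt_iff_tendsto_slope] at h
    refine ge_of_tendsto h ?_
    filter_upwards [self_mem_nhdsWithin] with y hy
    have hy' : y ≠ q := hy
    rw [slope_def_field]
    rcases lt_or_gt_of_ne hy' with h1 | h1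
    · rw [← neg_div_neg_eq]
      exact div_nonneg (by linarith [(hmono i) h1]) (by linarith)
    · exact div_nonneg (by linarith [(hmono i) h1]) (by linarith)
  -- the auxiliary function is positive on [-smax, ∞)
  have hgpos : ∀ i, ∀ q : ℝ, -smax ≤ q → 0 < (1 + q / c) * deriv (S i) q := by
    intro i q hq
    set q' : ℝ := max q 0 + 1 with hq'def
    have hq'0 : (0:ℝ) ≤ q' := by
      have := le_max_right q 0; simp only [hq'def]; linarith
    have hqq' : q < q' := by
      have := le_max_left q 0; simp only [hq'def]; linarith
    have h1 : (0:ℝ) ≤ 1 + q' / c := by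
      have := div_nonneg hq'0 hc.le; linarith
    have h2 : 0 ≤ (1 + q' / c) * deriv (S i) q' := mul_nonneg h1 (hS'0 i q')
    have h3 := hcond i q q' hq hqq'
    linarith
  have hfd : ∀ i, ∀ q : ℝ, -smax ≤ q → 0 < 1 + q / c ∧ 0 < deriv (S i) q := by
    intro i q hq
    have hg := hgpos i q hq
    have hd' : 0 < deriv (S i) q := by
      rcases (hS'0 i q).lt_or_eq with h | h
      · exact h
      · rw [← h, mul_zero] at hg; exact absurd hg (lt_irrefl 0)
    refine ⟨?_, hd'⟩
    by_contra hcon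
    push_neg at hcon
    nlinarith
  -- the derivative is strictly decreasing on [-smax, ∞)
  have hanti : ∀ i, StrictAntiOn (deriv (S i)) (Ici (-smax)) := by
    intro i q hq q' hq' hlt
    have h1 := hcond i q q' hq hlt
    have hfq := hfd i q hq
    have hfq' := hfd i q' hq'
    have hdivle : q / c ≤ q' / c := by
      gcongr
    have hle : (1 + q / c) * deriv (S i) q ≤ (1 + q' / c) * deriv (S i) q :=
      mul_le_mul_of_nonneg_right (by linarith) (hS'0 i q)
    exact lt_of_mul_lt_mul_left (h1.trans_le hle) hfq'.1.le
  -- each S i is strictly concave on [-smax, ∞)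
  have hconc : ∀ i, StrictConcaveOn ℝ (Ici (-smax)) (S i) := by
    intro i
    refine StrictAntiOn.strictConcaveOn_of_deriv (convex_Ici _)
      (hdiff i).continuous.continuousOn ((hanti i).mono ?_)
    rw [interior_Ici]
    exact Ioi_subset_Ici le_rfl
  set T := {q : Fin N → ℝ | ∑ i, q i = 0 ∧ ∀ i, -smax ≤ q i} with hTdef
  have hTconv : Convex ℝ T := by
    intro x hx y hy a b ha hb hab
    constructor
    · simp only [Pi.add_apply, Pi.smul_apply, smul_eq_mul]
      rw [Finset.sum_add_distrib, ← Finset.mul_sum, ← Finset.mul_sum, hx.1, hy.1]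
      ring
    · intro i
      have hx2 := hx.2 i; have hy2 := hy.2 i
      simp only [Pi.add_apply, Pi.smul_apply, smul_eq_mul]
      nlinarith
  -- strict concavity of the welfare
  have hSC : StrictConcaveOn ℝ T (fun q => ∑ i, S i (q i)) := by
    refine ⟨hTconv, ?_⟩
    intro x hx y hy hxy a b ha hb hab
    obtain ⟨j, hj⟩ : ∃ j, x j ≠ y j := by
      by_contra h; push_neg at h; exact hxy (funext h)
    simp only [smul_eq_mul, Pi.add_apply, Pi.smul_apply]
    rw [Finset.mul_sum, Finset.mul_sum, ← Finset.sum_add_distrib]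
    apply Finset.sum_lt_sum
    · intro i _
      have := (hconc i).concaveOn.2 (Set.mem_Ici.mpr (hx.2 i)) (Set.mem_Ici.mpr (hy.2 i))
        ha.le hb.le hab
      simpa [smul_eq_mul] using this
    · refine ⟨j, Finset.mem_univ j, ?_⟩
      have := (hconc j).2 (Set.mem_Ici.mpr (hx.2 j)) (Set.mem_Ici.mpr (hy.2 j)) hj ha hb hab
      simpa [smul_eq_mul] using this
  -- compactness of T
  have hTne : (0 : Fin N → ℝ) ∈ T := ⟨by simp, fun i => by simpa using hs.le⟩
  have hbound : T ⊆ Set.pi Set.univ (fun _ : Fin N => Icc (-smax) (((N:ℝ) - 1) * smax)) := by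
    intro q hq i _
    refine ⟨hq.2 i, ?_⟩
    have hsum := hq.1
    rw [← Finset.add_sum_erase _ _ (Finset.mem_univ i)] at hsum
    have hge : ∑ j ∈ Finset.univ.erase i, (-smax) ≤ ∑ j ∈ Finset.univ.erase i, q j :=
      Finset.sum_le_sum (fun j _ => hq.2 j)
    rw [Finset.sum_const, Finset.card_erase_of_mem (Finset.mem_univ i), Finset.card_univ,
      Fintype.card_fin] at hge
    have hcard : ((N - 1 : ℕ) : ℝ) = (N : ℝ) - 1 := by
      have : 1 ≤ N := le_trans (by norm_num) hN
      push_cast [Nat.cast_sub this]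
      ring
    rw [nsmul_eq_mul, hcard] at hge
    nlinarith
  have hTclosed : IsClosed T := by
    have h1 : IsClosed {q : Fin N → ℝ | ∑ i, q i = 0} :=
      isClosed_eq (continuous_finset_sum _ fun i _ => continuous_apply i) continuous_const
    have h2 : IsClosed (⋂ i, {q : Fin N → ℝ | -smax ≤ q i}) :=
      isClosed_iInter fun i => isClosed_le continuous_const (continuous_apply i)
    have : T = {q : Fin N → ℝ | ∑ i, q i = 0} ∩ ⋂ i, {q : Fin N → ℝ | -smax ≤ q i} := by
      ext q; simp [hTdef, Set.mem_iInter]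
    rw [this]
    exact h1.inter h2
  have hTcomp : IsCompact T :=
    (isCompact_univ_pi fun _ => isCompact_Icc).of_isClosed_subset hTclosed hbound
  have hfc : Continuous (fun q : Fin N → ℝ => ∑ i, S i (q i)) :=
    continuous_finset_sum _ fun i _ => ((hC2 i).continuous).comp (continuous_apply i)
  obtain ⟨x, hxT, hxmax⟩ := hTcomp.exists_isMaxOn ⟨0, hTne⟩ hfc.continuousOn
  have hxmax' : ∀ y ∈ T, ∑ i, S i (y i) ≤ ∑ i, S i (x i) := fun y hy => hxmax hy
  refine ⟨hSC, x, ⟨⟨hxT.1, hxT.2⟩, fun q' hq' => hxmax' q' hq'⟩, ?_⟩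
  rintro y ⟨hyT, hymax⟩
  by_contra hne
  have hyT' : y ∈ T := hyT
  have hfeq : ∑ i, S i (x i) = ∑ i, S i (y i) :=
    le_antisymm (hymax x hxT) (hxmax' y hyT')
  have hmem : (1/2 : ℝ) • y + (1/2 : ℝ) • x ∈ T :=
    hTconv hyT' hxT (by norm_num) (by norm_num) (by norm_num)
  have hstrict := hSC.2 hyT' hxT hne (by norm_num : (0:ℝ) < 1/2) (by norm_num : (0:ℝ) < 1/2)
    (by norm_num)
  simp only [smul_eq_mul] at hstrict
  have := hxmax' _ hmem
  rw [hfeq] at hstrict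
  linarith
end

section
/- If ∑_{j=1}^N θ_j < 0 and ∑_{j≠i} θ_j > 0, and S_i is differentiable and strictly increasing, then ∂π_i/∂θ_i = S_i'(Q(θ_i, p(θ)))·∂Q/∂θ_i + 1/N - 1 < 0 for all N ≥ 2; consequently prosumer i can strictly increase its payoff by decreasing θ_i, so no Nash equilibrium θ̃ exists with ∑_{j≠i} θ̃_j > 0 for some i. -/
/-- Market clearing price `p(θ) = -(∑ⱼ θⱼ)/(N d_min)`. -/
noncomputable def price (N : ℕ) (dmin : ℝ) (θ : Fin N → ℝ) : ℝ :=
  -(∑ j, θ j) / (N * dmin)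

/-- Strategic payoff `πᵢ(θ) = Sᵢ(Q(θᵢ, p(θ))) - p(θ)·Q(θᵢ, p(θ))` with
`Q(θᵢ, p) = d_min + θᵢ/p`. -/
noncomputable def payoff (N : ℕ) (dmin : ℝ) (S : Fin N → ℝ → ℝ)
    (θ : Fin N → ℝ) (i : Fin N) : ℝ :=
  S i (dmin + θ i / price N dmin θ) - price N dmin θ * (dmin + θ i / price N dmin θ)

/-!
Along the deviation `θᵢ ↦ t` the price is `p = -(t + s)/(N d_min)` with `s = ∑_{j≠i} θⱼ`, and
`p·Q = t - (t + s)/N`, so the payoff is `Sᵢ(d_min - N d_min t/(t + s)) + (t + s)/N - t`.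
The demand term has derivative `-N d_min s/(t + s)² ≤ 0` and `Sᵢ' ≥ 0`, while the linear part has
slope `1/N - 1 < 0`. A strictly negative derivative at `θᵢ` yields a profitable downward
deviation, which rules out a Nash equilibrium.
-/

open Filter Topology

lemma HasDerivAt.exists_lt_apply_lt_of_neg {f : ℝ → ℝ} {f' x : ℝ} (hf : HasDerivAt f f' x)
    (hf' : f' < 0) : ∃ t < x, f x < f t := by
  have hslope : ∀ᶠ t in 𝓝[<] x, slope f x t < 0 :=
    (hasDerivAt_iff_tendsto_slope_left_right.mp hf).1.eventually_lt_const hf'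
  obtain ⟨t, hneg, htx : t < x⟩ := (hslope.and self_mem_nhdsWithin).exists
  refine ⟨t, htx, ?_⟩
  rw [slope_def_field, div_neg_iff] at hneg
  rcases hneg with ⟨h, -⟩ | ⟨-, h⟩ <;> linarith

lemma hasDerivAt_const_sub_mul_div_add (d c s : ℝ) {x : ℝ} (hx : x + s ≠ 0) :
    HasDerivAt (fun t => d - c * t / (t + s)) (-(c * s / (x + s) ^ 2)) x := by
  have hnum : HasDerivAt (fun t => c * t) c x := by
    simpa using (hasDerivAt_id x).const_mul c
  have hden : HasDerivAt (fun t => t + s) 1 x := (hasDerivAt_id x).add_const s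
  exact ((hnum.div hden hx).const_sub d).congr_deriv (by ring)

lemma Finset.sum_update_univ_eq_add_sum_erase {ι M : Type*} [Fintype ι] [DecidableEq ι]
    [AddCommMonoid M] (θ : ι → M) (i : ι) (t : M) :
    ∑ k, Function.update θ i t k = t + ∑ j ∈ Finset.univ.erase i, θ j := by
  rw [Finset.sum_update_of_mem (Finset.mem_univ i), Finset.sdiff_singleton_eq_erase]

lemma payoff_update_self {N : ℕ} {dmin : ℝ} (hd : dmin ≠ 0) (S : Fin N → ℝ → ℝ)
    (θ : Fin N → ℝ) (i : Fin N) {t : ℝ} (ht : t + ∑ j ∈ Finset.univ.erase i, θ j ≠ 0) :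
    payoff N dmin S (Function.update θ i t) i =
      S i (dmin - N * dmin * t / (t + ∑ j ∈ Finset.univ.erase i, θ j)) +
        (t + ∑ j ∈ Finset.univ.erase i, θ j) / N - t := by
  have hN : (N : ℝ) ≠ 0 := Nat.cast_ne_zero.mpr i.pos.ne'
  simp only [payoff, price, Finset.sum_update_univ_eq_add_sum_erase, Function.update_self]
  generalize ∑ j ∈ Finset.univ.erase i, θ j = s at ht ⊢
  have hQ : dmin + t / (-(t + s) / (N * dmin)) = dmin - N * dmin * t / (t + s) := by
    field_simp
    ring
  rw [hQ]
  field_simp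
  ring

lemma hasDerivAt_payoff_update_self {N : ℕ} {dmin : ℝ} (hd : dmin ≠ 0) (S : Fin N → ℝ → ℝ)
    (θ : Fin N → ℝ) (i : Fin N) (hsum : ∑ j, θ j ≠ 0)
    (hS : DifferentiableAt ℝ (S i)
      (dmin - N * dmin * θ i / (θ i + ∑ j ∈ Finset.univ.erase i, θ j))) :
    HasDerivAt (fun t => payoff N dmin S (Function.update θ i t) i)
      (deriv (S i) (dmin - N * dmin * θ i / (θ i + ∑ j ∈ Finset.univ.erase i, θ j)) *
          -(N * dmin * (∑ j ∈ Finset.univ.erase i, θ j) /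
            (θ i + ∑ j ∈ Finset.univ.erase i, θ j) ^ 2) + 1 / N - 1) (θ i) := by
  rw [← Finset.add_sum_erase _ _ (Finset.mem_univ i)] at hsum
  generalize hs : ∑ j ∈ Finset.univ.erase i, θ j = s at hsum hS ⊢
  have hreduced : HasDerivAt (fun t => S i (dmin - N * dmin * t / (t + s)) + (t + s) / N - t)
      (deriv (S i) (dmin - N * dmin * θ i / (θ i + s)) *
        -(N * dmin * s / (θ i + s) ^ 2) + 1 / N - 1) (θ i) :=
    ((hS.hasDerivAt.comp (θ i) (hasDerivAt_const_sub_mul_div_add dmin (N * dmin) s hsum)).add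
      (((hasDerivAt_id _).add_const s).div_const (N : ℝ))).sub (hasDerivAt_id _)
  have hnear : ∀ᶠ t in 𝓝 (θ i), t + s ≠ 0 :=
    (continuous_id.add continuous_const).continuousAt.eventually_ne hsum
  refine hreduced.congr_of_eventuallyEq ?_
  filter_upwards [hnear] with t ht
  rw [payoff_update_self hd S θ i (hs ▸ ht), hs]

/-- part of Lemma 1: if `∑ⱼ θⱼ < 0` and `∑_{j≠i} θⱼ > 0`, then
`∂πᵢ/∂θᵢ < 0`; prosumer `i` can strictly increase its payoff by decreasing
`θᵢ`, so such a `θ` is not a Nash equilibrium. -/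
theorem stmt8 (N : ℕ) (hN : 2 ≤ N) (dmin : ℝ) (hd : 0 < dmin) (S : Fin N → ℝ → ℝ)
    (hdiff : ∀ i, Differentiable ℝ (S i)) (hmono : ∀ i, StrictMono (S i))
    (θ : Fin N → ℝ) (i : Fin N) (hsum : ∑ j, θ j < 0)
    (hothers : 0 < ∑ j ∈ Finset.univ.erase i, θ j) :
    deriv (fun t => payoff N dmin S (Function.update θ i t) i) (θ i) < 0 ∧
    (∃ t : ℝ, t < θ i ∧
      payoff N dmin S θ i < payoff N dmin S (Function.update θ i t) i) ∧
    ¬ (∀ (j : Fin N) (t : ℝ), ∑ k, Function.update θ j t k < 0 →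
        payoff N dmin S (Function.update θ j t) j ≤ payoff N dmin S θ j) := by
  set s := ∑ j ∈ Finset.univ.erase i, θ j
  set Q := dmin - N * dmin * θ i / (θ i + s)
  have hN' : (2 : ℝ) ≤ N := by exact_mod_cast hN
  have hderiv := hasDerivAt_payoff_update_self hd.ne' S θ i hsum.ne (hdiff i Q)
  have hneg : deriv (S i) Q * -(N * dmin * s / (θ i + s) ^ 2) + 1 / N - 1 < 0 := by
    have hS' : 0 ≤ deriv (S i) Q := (hmono i).monotone.deriv_nonneg
    have hQ' : 0 ≤ N * dmin * s / (θ i + s) ^ 2 := by positivity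
    have hN_inv : 1 / (N : ℝ) < 1 := by rw [div_lt_one] <;> linarith
    have hdemand : deriv (S i) Q * -(N * dmin * s / (θ i + s) ^ 2) ≤ 0 :=
      mul_nonpos_of_nonneg_of_nonpos hS' (neg_nonpos.mpr hQ')
    linarith
  obtain ⟨t, ht, hprofit⟩ := hderiv.exists_lt_apply_lt_of_neg hneg
  rw [Function.update_eq_self] at hprofit
  refine ⟨hderiv.deriv ▸ hneg, ⟨t, ht, hprofit⟩, fun hnash => ?_⟩
  have hfeasible : ∑ k, Function.update θ i t k < 0 := by
    rw [Finset.sum_update_univ_eq_add_sum_erase]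
    rw [← Finset.add_sum_erase _ _ (Finset.mem_univ i)] at hsum
    linarith
  exact (hnash i t hfeasible).not_gt hprofit
end

section
/- The all-zero bidding profile θ = 0 is not a Nash equilibrium of the game G: with the convention π_i(0, 0_{-i}) = S_i(d_min) = 0, prosumer i can achieve a strictly positive payoff by a unilateral deviation to some θ_i ≠ 0. -/
/-- part of Lemma 1: the all-zero profile is not a Nash
equilibrium: `πᵢ(0) = Sᵢ(d_min) = 0` but prosumer `i` has a unilateral
deviation `θᵢ = t ≠ 0` giving a strictly positive payoff. -/
theorem stmt9 (N : ℕ) (hN : 2 ≤ N) (dmin : ℝ) (hd : 0 < dmin) (S : Fin N → ℝ → ℝ)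
    (hcont : ∀ i, Continuous (S i)) (hmono : ∀ i, StrictMono (S i))
    (hzero : ∀ i, S i dmin = 0) (i : Fin N) :
    payoff N dmin S (0 : Fin N → ℝ) i = 0 ∧
    ∃ t : ℝ, t ≠ 0 ∧ (∑ j, Function.update (0 : Fin N → ℝ) i t j < 0) ∧
      0 < payoff N dmin S (Function.update (0 : Fin N → ℝ) i t) i := by
  have hN2 : (2:ℝ) ≤ (N:ℝ) := by exact_mod_cast hN
  have hN0 : (0:ℝ) < (N:ℝ) := by linarith
  have hN1 : (0:ℝ) < (N:ℝ) - 1 := by linarith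
  have hc : S i (dmin - N * dmin) < 0 := by
    have h1 : dmin - N * dmin < dmin := by nlinarith
    have := (hmono i) h1
    rw [hzero i] at this
    exact this
  set c := S i (dmin - N * dmin) with hcdef
  set t : ℝ := c * N / (N - 1) - 1 with htdef
  have ht0 : t < 0 := by
    have : c * N / (N - 1) ≤ 0 := by
      apply div_nonpos_of_nonpos_of_nonneg
      · nlinarith
      · linarith
    simp only [htdef]; linarith
  have hsum : (∑ j, Function.update (0 : Fin N → ℝ) i t j) = t := by
    rw [Finset.sum_update_of_mem (Finset.mem_univ i)]
    simp
  refine ⟨?_, t, ne_of_lt ht0, by rw [hsum]; exact ht0, ?_⟩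
  · simp [payoff, price, hzero]
  · have hp : price N dmin (Function.update (0 : Fin N → ℝ) i t) = -t / (N * dmin) := by
      rw [price, hsum]
    have hpne : (-t / (N * dmin)) ≠ 0 := by
      apply div_ne_zero (by linarith) (by positivity)
    have hQ : dmin + t / (-t / (N * dmin)) = dmin - N * dmin := by
      have hne : t ≠ 0 := ne_of_lt ht0
      rw [div_div_eq_mul_div]
      have h2 : t * (↑N * dmin) / -t = -(↑N * dmin) := by
        rw [div_eq_iff (neg_ne_zero.mpr hne)]; ring
      rw [h2]; ring
    rw [payoff, hp, Function.update_self, hQ, ← hcdef]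
    have : -t / (N * dmin) * (dmin - N * dmin) = t * (N - 1) / N := by
      rw [div_mul_eq_mul_div, div_eq_div_iff (by positivity) hN0.ne']
      ring
    rw [this]
    have ht' : t * (N - 1) / N < c := by
      have h1 : t * (N-1) = c * N - (N - 1) := by
        rw [htdef, sub_mul, div_mul_cancel₀ _ hN1.ne']; ring
      rw [h1]
      rw [div_lt_iff₀ hN0]
      nlinarith
    linarith
end

section
/- The second derivative of the strategic payoff π_i with respect to θ_i equals S_i''(q_i)·(∂Q/∂θ_i)² + S_i'(q_i)·(-2/∑_j θ_j)·(∂Q/∂θ_i), where q_i = Q(θ_i, p(θ)); in particular, if ∑_j θ_j < 0, ∑_{j≠i} θ_j < 0, S_i'' ≤ 0 and S_i' > 0, then π_i is concave in θ_i on the region where θ_i ≥ -(∑_{j≠i} θ_j)·((N d_min/2)·S_i''(q_i)/S_i'(q_i) + 1). -/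
/-!
On `{t | t + c ≠ 0}` the payoff is `S (Q t) + (t + c) / N - t`, so its derivative is
`S'(Q t) Q'(t) + 1 / N - 1`, and the chain and product rules together with
`Q'' = -2 Q' / (t + c)` give the second derivative. For concavity, that second derivative
factors as `2 c N d_min ((t + c) S' + (c N d_min / 2) S'') / (t + c) ^ 4`; the first factor
is negative and the region condition, multiplied by `S' > 0`, says exactly that the
second factor is nonnegative.
-/

/-- Prosumer `i`'s strategic payoff as a function of its own parameter `t`,
with the other players' parameters summing to `c`, so that the price is
`p = -(t + c)/(N d_min)` and `Q = d_min + t/p`. -/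
noncomputable def payoffFun (N : ℕ) (dmin : ℝ) (S : ℝ → ℝ) (c : ℝ) : ℝ → ℝ :=
  fun t => S (dmin + t / (-(t + c) / (N * dmin)))
    - (-(t + c) / (N * dmin)) * (dmin + t / (-(t + c) / (N * dmin)))

open Filter Topology

namespace Prosumer

variable {N : ℕ} {dmin c t : ℝ}

noncomputable def price (N : ℕ) (dmin c t : ℝ) : ℝ := -(t + c) / (N * dmin)

noncomputable def quantity (N : ℕ) (dmin c t : ℝ) : ℝ := dmin + t / price N dmin c t

noncomputable def quantityDeriv (N : ℕ) (dmin c t : ℝ) : ℝ := -c * N * dmin / (t + c) ^ 2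

theorem hasDerivAt_price (N : ℕ) (dmin c t : ℝ) :
    HasDerivAt (price N dmin c) (-1 / (N * dmin)) t := by
  have h := ((hasDerivAt_id' t).add_const c).neg.div_const ((N : ℝ) * dmin)
  exact h.congr_deriv (by ring)

theorem hasDerivAt_quantityDeriv (N : ℕ) (dmin : ℝ) (ht : t + c ≠ 0) :
    HasDerivAt (quantityDeriv N dmin c) (2 * c * N * dmin / (t + c) ^ 3) t := by
  have h := (hasDerivAt_const t (-c * N * dmin)).div
    (((hasDerivAt_id' t).add_const c).pow 2) (pow_ne_zero 2 ht)
  refine h.congr_deriv ?_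
  simp only [Pi.pow_apply]
  field_simp
  ring

section

variable (hN : (N : ℝ) ≠ 0) (hd : dmin ≠ 0) (ht : t + c ≠ 0)
include hN hd ht

theorem price_ne_zero : price N dmin c t ≠ 0 := by
  unfold price
  exact div_ne_zero (neg_ne_zero.mpr ht) (mul_ne_zero hN hd)

theorem hasDerivAt_quantity :
    HasDerivAt (quantity N dmin c) (quantityDeriv N dmin c t) t := by
  have h := ((hasDerivAt_id' t).div (hasDerivAt_price N dmin c t)
    (price_ne_zero hN hd ht)).const_add dmin
  refine h.congr_deriv ?_
  unfold quantityDeriv price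
  field_simp
  ring

theorem hasDerivAt_payoffFun {S : ℝ → ℝ} (hS : DifferentiableAt ℝ S (quantity N dmin c t)) :
    HasDerivAt (payoffFun N dmin S c)
      (deriv S (quantity N dmin c t) * quantityDeriv N dmin c t + (1 / N - 1)) t := by
  have hQ := hasDerivAt_quantity hN hd ht
  have h := (hS.hasDerivAt.comp t hQ).sub ((hasDerivAt_price N dmin c t).mul hQ)
  refine h.congr_deriv ?_
  unfold quantityDeriv quantity price
  field_simp
  ring

theorem deriv_deriv_payoffFun {S : ℝ → ℝ} (hS : ContDiff ℝ 2 S) :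
    deriv (deriv (payoffFun N dmin S c)) t
      = deriv (deriv S) (quantity N dmin c t) * quantityDeriv N dmin c t ^ 2
        + deriv S (quantity N dmin c t) * (-2 / (t + c)) * quantityDeriv N dmin c t := by
  have hS1 := hS.differentiable two_ne_zero
  have hderiv : deriv (payoffFun N dmin S c) =ᶠ[𝓝 t]
      fun y => deriv S (quantity N dmin c y) * quantityDeriv N dmin c y + (1 / N - 1) := by
    filter_upwards [isOpen_ne_fun (continuous_add_const c) continuous_const |>.mem_nhds ht]
      with y hy using (hasDerivAt_payoffFun hN hd hy (hS1 _)).deriv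
  have h := ((hS.differentiable_deriv_two _).hasDerivAt.comp t (hasDerivAt_quantity hN hd ht)).mul
    (hasDerivAt_quantityDeriv N dmin ht) |>.add_const (1 / (N : ℝ) - 1)
  rw [hderiv.deriv_eq]
  refine h.deriv.trans ?_
  simp only [Function.comp_apply, quantityDeriv]
  field_simp

end

theorem deriv_deriv_payoffFun_nonpos {S : ℝ → ℝ} (hN : 0 < (N : ℝ)) (hd : 0 < dmin)
    (hc : c ≤ 0) (ht : t + c < 0) (hS : ContDiff ℝ 2 S) (hS' : 0 < deriv S (quantity N dmin c t))
    (hregion : -c * ((N * dmin / 2) * deriv (deriv S) (quantity N dmin c t)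
      / deriv S (quantity N dmin c t) + 1) ≤ t) :
    deriv (deriv (payoffFun N dmin S c)) t ≤ 0 := by
  rw [deriv_deriv_payoffFun hN.ne' hd.ne' ht.ne hS]
  set r1 := deriv S (quantity N dmin c t)
  set r2 := deriv (deriv S) (quantity N dmin c t)
  have hcross : -c * (N * dmin / 2) * r2 ≤ (t + c) * r1 := by
    rw [← div_le_iff₀ hS']
    rw [mul_add, mul_one, ← mul_div_assoc, ← mul_assoc] at hregion
    linarith
  have hfactor : r2 * quantityDeriv N dmin c t ^ 2 + r1 * (-2 / (t + c)) * quantityDeriv N dmin c t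
      = 2 * c * N * dmin * ((t + c) * r1 + c * (N * dmin / 2) * r2) / (t + c) ^ 4 := by
    unfold quantityDeriv
    field_simp [ht.ne]
    ring
  rw [hfactor]
  refine div_nonpos_of_nonpos_of_nonneg
    (mul_nonpos_of_nonpos_of_nonneg ?_ (by linarith)) (by positivity)
  have := mul_pos hN hd
  nlinarith

end Prosumer

theorem stmt11_general (N : ℕ) (hN : 2 ≤ N) (dmin : ℝ) (hd : 0 < dmin) (S : ℝ → ℝ)
    (hC2 : ContDiff ℝ 2 S) (hS' : ∀ q, 0 < deriv S q)
    (c : ℝ) (hc : c < 0)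
    (θi : ℝ) (hsum : θi + c < 0) :
    deriv (deriv (payoffFun N dmin S c)) θi
      = deriv (deriv S) (dmin + θi / (-(θi + c) / (N * dmin)))
          * (-c * N * dmin / (θi + c) ^ 2) ^ 2
        + deriv S (dmin + θi / (-(θi + c) / (N * dmin)))
          * (-2 / (θi + c)) * (-c * N * dmin / (θi + c) ^ 2) ∧
    ∀ t : ℝ, t + c < 0 →
      -c * ((N * dmin / 2)
          * deriv (deriv S) (dmin + t / (-(t + c) / (N * dmin)))
          / deriv S (dmin + t / (-(t + c) / (N * dmin))) + 1) ≤ t →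
      deriv (deriv (payoffFun N dmin S c)) t ≤ 0 := by
  have hNpos : 0 < (N : ℝ) := Nat.cast_pos.mpr (by omega)
  exact ⟨Prosumer.deriv_deriv_payoffFun hNpos.ne' hd.ne' hsum.ne hC2,
    fun t ht hregion =>
      Prosumer.deriv_deriv_payoffFun_nonpos hNpos hd hc.le ht hC2 (hS' _) hregion⟩

/-- Lemma 2 computation: the second derivative of the strategic
payoff is `Sᵢ''(qᵢ)(∂Q/∂θᵢ)² + Sᵢ'(qᵢ)(-2/∑ⱼθⱼ)(∂Q/∂θᵢ)` where
`∂Q/∂θᵢ = -c·N·d_min/(∑ⱼθⱼ)²`; if moreover `∑ⱼθⱼ < 0`, `c < 0`, `S'' ≤ 0`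
and `S' > 0`, the payoff is concave (second derivative `≤ 0`) on the region
`θᵢ ≥ -c((N d_min/2)·S''(qᵢ)/S'(qᵢ) + 1)`. -/
theorem stmt11 (N : ℕ) (hN : 2 ≤ N) (dmin : ℝ) (hd : 0 < dmin) (S : ℝ → ℝ)
    (hC2 : ContDiff ℝ 2 S) (hS' : ∀ q, 0 < deriv S q)
    (hS'' : ∀ q, deriv (deriv S) q ≤ 0) (c : ℝ) (hc : c < 0)
    (θi : ℝ) (hsum : θi + c < 0) :
    deriv (deriv (payoffFun N dmin S c)) θi
      = deriv (deriv S) (dmin + θi / (-(θi + c) / (N * dmin)))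
          * (-c * N * dmin / (θi + c) ^ 2) ^ 2
        + deriv S (dmin + θi / (-(θi + c) / (N * dmin)))
          * (-2 / (θi + c)) * (-c * N * dmin / (θi + c) ^ 2) ∧
    ∀ t : ℝ, t + c < 0 →
      -c * ((N * dmin / 2)
          * deriv (deriv S) (dmin + t / (-(t + c) / (N * dmin)))
          / deriv S (dmin + t / (-(t + c) / (N * dmin))) + 1) ≤ t →
      deriv (deriv (payoffFun N dmin S c)) t ≤ 0 :=
  stmt11_general N hN dmin hd S hC2 hS' c hc θi hsum
end

section
/- Let q̃ be the allocation of a Nash equilibrium θ̃ with p(θ̃) > 0 in the strategic prosumer game, where each prosumer's payoff is concave in its own parameter. Then for each i: if q̃_i > -s_max then S_i'(q̃_i)·(1 + q̃_i/((N-1)d_min)) = p(θ̃), and if q̃_i = -s_max then S_i'(q̃_i)·(1 + q̃_i/((N-1)d_min)) ≤ p(θ̃). These are exactly the KKT optimality conditions for maximizing ∑_i S̃_i(q_i) subject to ∑_i q_i = 0 and q_i ≥ -s_max, with multiplier η̃ = p(θ̃); hence the Nash equilibrium allocation q̃ is the unique maximizer of the modified welfare program. -/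
/-- The modified utility/cost function `S̃`. -/
noncomputable def Stilde (N : ℕ) (dmin : ℝ) (S : ℝ → ℝ) : ℝ → ℝ :=
  fun q => (1 + q / (((N : ℝ) - 1) * dmin)) * S q
    - (1 / (((N : ℝ) - 1) * dmin)) * ∫ z in dmin..q, S z

open Finset Set Filter Topology

theorem HasDerivAt.nonpos_of_forall_le_of_le {f g : ℝ → ℝ} {f' g' x : ℝ}
    (hf : HasDerivAt f f' x) (hg : HasDerivAt g g' x) (hg' : 0 < g')
    (hmax : ∀ t, g x ≤ g t → f t ≤ f x) : f' ≤ 0 := by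
  have hright : 𝓝[>] x ≤ 𝓝[≠] x := nhdsWithin_mono _ fun t ht => ne_of_gt ht
  have hslope_f := (hasDerivAt_iff_tendsto_slope.1 hf).mono_left hright
  have hslope_g := (hasDerivAt_iff_tendsto_slope.1 hg).mono_left hright
  refine le_of_tendsto hslope_f ?_
  filter_upwards [hslope_g.eventually (eventually_gt_nhds hg'), self_mem_nhdsWithin]
    with t hpos (ht : x < t)
  rw [slope_def_field] at hpos ⊢
  have hgt : g x ≤ g t := by
    have := (div_pos_iff_of_pos_right (sub_pos.2 ht)).1 hpos
    linarith
  exact div_nonpos_of_nonpos_of_nonneg (sub_nonpos.2 (hmax t hgt)) (sub_nonneg.2 ht.le)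

theorem StrictConcaveOn.lt_add_mul_sub_of_hasDerivAt {s : Set ℝ} {f : ℝ → ℝ} {f' x y : ℝ}
    (hf : StrictConcaveOn ℝ s f) (hx : x ∈ s) (hy : y ∈ s) (hxy : y ≠ x)
    (hf' : HasDerivAt f f' x) : f y < f x + f' * (y - x) := by
  rcases hxy.lt_or_gt with hlt | hlt
  · have := hf.lt_slope_of_hasDerivAt hy hx hlt hf'
    rw [slope_def_field, lt_div_iff₀ (sub_pos.2 hlt)] at this
    linarith
  · have := hf.slope_lt_of_hasDerivAt hx hy hlt hf'
    rw [slope_def_field, div_lt_iff₀ (sub_pos.2 hlt)] at this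
    linarith

theorem sum_lt_sum_of_kkt {ι : Type*} [Fintype ι] {F : ι → ℝ → ℝ} {F' : ι → ℝ}
    {x y : ι → ℝ} {m p : ℝ} (hF : ∀ i, StrictConcaveOn ℝ (Ici m) (F i))
    (hF' : ∀ i, HasDerivAt (F i) (F' i) (x i)) (hx : ∀ i, m ≤ x i)
    (hint : ∀ i, m < x i → F' i = p) (hbd : ∀ i, x i = m → F' i ≤ p)
    (hy : ∀ i, m ≤ y i) (hsum : ∑ i, y i = ∑ i, x i) (hne : y ≠ x) :
    ∑ i, F i (y i) < ∑ i, F i (x i) := by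
  have hlin : ∀ i, F' i * (y i - x i) ≤ p * (y i - x i) := fun i => by
    rcases (hx i).eq_or_lt with heq | hlt
    · exact mul_le_mul_of_nonneg_right (hbd i heq.symm) (by linarith [hy i])
    · rw [hint i hlt]
  have hstrict : ∀ i, y i ≠ x i → F i (y i) < F i (x i) + p * (y i - x i) := fun i hi =>
    ((hF i).lt_add_mul_sub_of_hasDerivAt (hx i) (hy i) hi (hF' i)).trans_le
      (by linarith [hlin i])
  have hle : ∀ i, F i (y i) ≤ F i (x i) + p * (y i - x i) := fun i => by
    rcases eq_or_ne (y i) (x i) with heq | hi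
    · simp [heq]
    · exact (hstrict i hi).le
  obtain ⟨i₀, hi₀⟩ := Function.ne_iff.1 hne
  calc ∑ i, F i (y i) < ∑ i, (F i (x i) + p * (y i - x i)) :=
        sum_lt_sum (fun i _ => hle i) ⟨i₀, mem_univ _, hstrict i₀ hi₀⟩
    _ = ∑ i, F i (x i) := by
        rw [sum_add_distrib, ← mul_sum, sum_sub_distrib, hsum, sub_self, mul_zero, add_zero]

section Market

variable {N : ℕ} {dmin : ℝ}

theorem mul_ne_zero_of_price_ne_zero {θ : Fin N → ℝ} (hp : price N dmin θ ≠ 0) :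
    (N : ℝ) * dmin ≠ 0 :=
  fun h => hp (by simp [price, h])

theorem price_update (θ : Fin N → ℝ) (i : Fin N) (t : ℝ) :
    price N dmin (Function.update θ i t) = price N dmin θ - (t - θ i) / (N * dmin) := by
  simp only [price, sum_update_of_mem (mem_univ i),
    sum_eq_add_sum_sdiff_singleton_of_mem (mem_univ i) θ]
  ring

theorem sum_allocation_eq_zero {θ : Fin N → ℝ} (hp : price N dmin θ ≠ 0) :
    ∑ i, (dmin + θ i / price N dmin θ) = 0 := by
  have hc := mul_ne_zero_of_price_ne_zero hp
  have hsum : ∑ j, θ j = -(price N dmin θ * (N * dmin)) := by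
    have : price N dmin θ * (N * dmin) = -∑ j, θ j := div_mul_cancel₀ _ hc
    linarith
  rw [sum_add_distrib, ← sum_div, hsum]
  simp only [sum_const, card_univ, Fintype.card_fin, nsmul_eq_mul]
  rw [neg_div, mul_div_cancel_left₀ _ hp, add_neg_cancel]

theorem hasDerivAt_price_update (θ : Fin N → ℝ) (i : Fin N) (t : ℝ) :
    HasDerivAt (fun t => price N dmin (Function.update θ i t)) (-(1 / (N * dmin))) t := by
  simp_rw [price_update]
  simpa using (((hasDerivAt_id t).sub_const (θ i)).div_const (N * dmin)).const_sub
    (price N dmin θ)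

theorem hasDerivAt_allocation_update {θ : Fin N → ℝ} (i : Fin N) (hp : price N dmin θ ≠ 0) :
    HasDerivAt (fun t => dmin + t / price N dmin (Function.update θ i t))
      ((((N : ℝ) - 1) * dmin + (dmin + θ i / price N dmin θ)) / (N * dmin * price N dmin θ))
      (θ i) := by
  have hc := mul_ne_zero_of_price_ne_zero hp
  obtain ⟨hN, hd⟩ := mul_ne_zero_iff.1 hc
  have h := ((hasDerivAt_id' (θ i)).div (hasDerivAt_price_update θ i (θ i))
    (by rwa [Function.update_eq_self])).const_add dmin
  rw [Function.update_eq_self] at h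
  refine h.congr_deriv ?_
  field_simp
  ring

theorem hasDerivAt_payoff_update {S : Fin N → ℝ → ℝ} {θ : Fin N → ℝ} {i : Fin N}
    (hA : ((N : ℝ) - 1) * dmin ≠ 0) (hp : price N dmin θ ≠ 0)
    (hS : DifferentiableAt ℝ (S i) (dmin + θ i / price N dmin θ)) :
    HasDerivAt (fun t => payoff N dmin S (Function.update θ i t) i)
      ((((N : ℝ) - 1) * dmin / (N * dmin * price N dmin θ)) *
        (deriv (S i) (dmin + θ i / price N dmin θ) *
          (1 + (dmin + θ i / price N dmin θ) / (((N : ℝ) - 1) * dmin)) - price N dmin θ))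
      (θ i) := by
  have hc := mul_ne_zero_of_price_ne_zero hp
  obtain ⟨hN, hd⟩ := mul_ne_zero_iff.1 hc
  have hq := hasDerivAt_allocation_update i hp
  have h := (hS.hasDerivAt.comp_of_eq (θ i) hq (by rw [Function.update_eq_self])).sub
    ((hasDerivAt_price_update (dmin := dmin) θ i (θ i)).mul hq)
  simp only [Function.update_eq_self] at h
  simp only [payoff, Function.update_self]
  refine h.congr_deriv ?_
  have hN1 : (N : ℝ) - 1 ≠ 0 := (mul_ne_zero_iff.1 hA).1
  generalize deriv (S i) (dmin + θ i / price N dmin θ) = s'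
  field_simp
  ring

end Market

section Nash

variable {N : ℕ} {dmin smax : ℝ} {S : Fin N → ℝ → ℝ} {θ : Fin N → ℝ} {i : Fin N}

theorem deriv_mul_eq_price_of_nash (hA : ((N : ℝ) - 1) * dmin ≠ 0) (hp : price N dmin θ ≠ 0)
    (hS : DifferentiableAt ℝ (S i) (dmin + θ i / price N dmin θ))
    (hNash : ∀ t, -smax ≤ dmin + t / price N dmin (Function.update θ i t) →
      payoff N dmin S (Function.update θ i t) i ≤ payoff N dmin S θ i)
    (hlt : -smax < dmin + θ i / price N dmin θ) :
    deriv (S i) (dmin + θ i / price N dmin θ) *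
      (1 + (dmin + θ i / price N dmin θ) / (((N : ℝ) - 1) * dmin)) = price N dmin θ := by
  have hc := mul_ne_zero_of_price_ne_zero hp
  have hfeas : ∀ᶠ t in 𝓝 (θ i), -smax < dmin + t / price N dmin (Function.update θ i t) :=
    (hasDerivAt_allocation_update i hp).continuousAt.eventually_const_lt
      (by simpa only [Function.update_eq_self] using hlt)
  have hmax : IsLocalMax (fun t => payoff N dmin S (Function.update θ i t) i) (θ i) := by
    filter_upwards [hfeas] with t ht
    simpa only [Function.update_eq_self] using hNash t ht.le
  have hD := hmax.hasDerivAt_eq_zero (hasDerivAt_payoff_update hA hp hS)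
  exact sub_eq_zero.1 ((mul_eq_zero.1 hD).resolve_left (div_ne_zero hA (mul_ne_zero hc hp)))

theorem deriv_mul_le_price_of_nash (hd : 0 < dmin) (hA : 0 < ((N : ℝ) - 1) * dmin)
    (hp : 0 < price N dmin θ) (hmono : Monotone (S i))
    (hS : DifferentiableAt ℝ (S i) (dmin + θ i / price N dmin θ))
    (hNash : ∀ t, -smax ≤ dmin + t / price N dmin (Function.update θ i t) →
      payoff N dmin S (Function.update θ i t) i ≤ payoff N dmin S θ i)
    (heq : dmin + θ i / price N dmin θ = -smax) :
    deriv (S i) (dmin + θ i / price N dmin θ) *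
      (1 + (dmin + θ i / price N dmin θ) / (((N : ℝ) - 1) * dmin)) ≤ price N dmin θ := by
  rcases le_or_gt (((N : ℝ) - 1) * dmin + (dmin + θ i / price N dmin θ)) 0 with hle | hpos
  · have hfactor : 1 + (dmin + θ i / price N dmin θ) / (((N : ℝ) - 1) * dmin) ≤ 0 := by
      rw [one_add_div hA.ne']
      exact div_nonpos_of_nonpos_of_nonneg hle hA.le
    exact (mul_nonpos_of_nonneg_of_nonpos hmono.deriv_nonneg hfactor).trans hp.le
  · -- here raising `θᵢ` raises the allocation, so deviations to the right stay feasible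
    have hc : 0 < (N : ℝ) * dmin := by
      linarith [show (N : ℝ) * dmin = (N - 1) * dmin + dmin by ring]
    have hD := (hasDerivAt_payoff_update hA.ne' hp.ne' hS).nonpos_of_forall_le_of_le
      (hasDerivAt_allocation_update i hp.ne') (div_pos hpos (mul_pos hc hp)) fun t ht => by
        rw [Function.update_eq_self, heq] at ht
        simpa only [Function.update_eq_self] using hNash t ht
    exact sub_nonpos.1 (nonpos_of_mul_nonpos_right hD (div_pos hA (mul_pos hc hp)))

end Nash

section ModifiedUtility

variable {N : ℕ} {dmin : ℝ} {S : ℝ → ℝ}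

theorem hasDerivAt_Stilde (hS : Continuous S) {x : ℝ} (hSx : DifferentiableAt ℝ S x) :
    HasDerivAt (Stilde N dmin S) (deriv S x * (1 + x / (((N : ℝ) - 1) * dmin))) x := by
  have hint : HasDerivAt (fun q => ∫ z in dmin..q, S z) (S x) x :=
    intervalIntegral.integral_hasDerivAt_right (hS.intervalIntegrable _ _)
      hS.stronglyMeasurable.stronglyMeasurableAtFilter hS.continuousAt
  have h := ((((hasDerivAt_id' x).div_const (((N : ℝ) - 1) * dmin)).const_add 1).mul
    hSx.hasDerivAt).sub (hint.const_mul (1 / (((N : ℝ) - 1) * dmin)))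
  exact h.congr_deriv (by ring)

theorem strictConcaveOn_Stilde {m : ℝ} (hS : Differentiable ℝ S)
    (hcond : ∀ q q' : ℝ, m ≤ q → q < q' →
      (1 + q' / (((N : ℝ) - 1) * dmin)) * deriv S q'
        < (1 + q / (((N : ℝ) - 1) * dmin)) * deriv S q) :
    StrictConcaveOn ℝ (Ici m) (Stilde N dmin S) := by
  have hderiv : ∀ x, deriv (Stilde N dmin S) x = (1 + x / (((N : ℝ) - 1) * dmin)) * deriv S x :=
    fun x => ((hasDerivAt_Stilde hS.continuous (hS x)).deriv).trans (mul_comm _ _)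
  refine StrictAntiOn.strictConcaveOn_of_deriv (convex_Ici m)
    (fun x _ => (hasDerivAt_Stilde hS.continuous (hS x)).continuousAt.continuousWithinAt) ?_
  rw [interior_Ici]
  intro x hx y _ hxy
  simpa only [hderiv] using hcond x y (le_of_lt hx) hxy

end ModifiedUtility

theorem stmt15_general (N : ℕ) (hN : 2 ≤ N) (dmin smax : ℝ) (hd : 0 < dmin)
    (S : Fin N → ℝ → ℝ) (hC2 : ∀ i, ContDiff ℝ 2 (S i)) (hmono : ∀ i, StrictMono (S i))
    (hcond : ∀ i, ∀ q q' : ℝ, -smax ≤ q → q < q' →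
      (1 + q' / (((N : ℝ) - 1) * dmin)) * deriv (S i) q'
        < (1 + q / (((N : ℝ) - 1) * dmin)) * deriv (S i) q)
    (θ : Fin N → ℝ) (hp : 0 < price N dmin θ)
    (hNash : ∀ (i : Fin N) (t : ℝ),
      -smax ≤ dmin + t / price N dmin (Function.update θ i t) →
      payoff N dmin S (Function.update θ i t) i ≤ payoff N dmin S θ i)
    (qt : Fin N → ℝ) (hq : ∀ i, qt i = dmin + θ i / price N dmin θ)
    (hfeas : ∀ i, -smax ≤ qt i) :
    (∀ i, (-smax < qt i →
        deriv (S i) (qt i) * (1 + qt i / (((N : ℝ) - 1) * dmin)) = price N dmin θ) ∧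
      (qt i = -smax →
        deriv (S i) (qt i) * (1 + qt i / (((N : ℝ) - 1) * dmin)) ≤ price N dmin θ)) ∧
    (∑ i, qt i = 0) ∧
    (∀ q : Fin N → ℝ, (∑ i, q i = 0 ∧ ∀ i, -smax ≤ q i) → q ≠ qt →
      ∑ i, Stilde N dmin (S i) (q i) < ∑ i, Stilde N dmin (S i) (qt i)) := by
  have hdiff : ∀ i, Differentiable ℝ (S i) := fun i => (hC2 i).differentiable two_ne_zero
  have hA : 0 < ((N : ℝ) - 1) * dmin :=
    mul_pos (by linarith [show (2 : ℝ) ≤ N by exact_mod_cast hN]) hd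
  obtain rfl : qt = fun i => dmin + θ i / price N dmin θ := funext hq
  have hKKT := fun i => And.intro
    (deriv_mul_eq_price_of_nash hA.ne' hp.ne' (hdiff i _) (hNash i))
    (deriv_mul_le_price_of_nash hd hA hp (hmono i).monotone (hdiff i _) (hNash i))
  have hsum := sum_allocation_eq_zero hp.ne'
  refine ⟨hKKT, hsum, fun q ⟨hq0, hqm⟩ hne => ?_⟩
  exact sum_lt_sum_of_kkt (fun i => strictConcaveOn_Stilde (hdiff i) (hcond i))
    (fun i => hasDerivAt_Stilde (hdiff i).continuous (hdiff i _)) hfeas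
    (fun i => (hKKT i).1) (fun i => (hKKT i).2) hqm (hq0.trans hsum.symm) hne

/-- Theorem 2: at a Nash equilibrium `θ̃` with positive price
and own-parameter-concave payoffs, the allocation `q̃ᵢ = Q(θ̃ᵢ, p(θ̃))`
satisfies the KKT conditions
`Sᵢ'(q̃ᵢ)(1 + q̃ᵢ/((N-1)d_min)) = p(θ̃)` if `q̃ᵢ > -s_max` (and `≤` at the
bound), i.e. those of maximizing `∑ᵢ S̃ᵢ(qᵢ)` over the feasible set with
multiplier `η̃ = p(θ̃)`; hence `q̃` is the unique maximizer of the modified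
welfare program. -/
theorem stmt15 (N : ℕ) (hN : 2 ≤ N) (dmin smax : ℝ) (hd : 0 < dmin) (hs : 0 < smax)
    (S : Fin N → ℝ → ℝ) (hC2 : ∀ i, ContDiff ℝ 2 (S i)) (hmono : ∀ i, StrictMono (S i))
    (hcond : ∀ i, ∀ q q' : ℝ, -smax ≤ q → q < q' →
      (1 + q' / (((N : ℝ) - 1) * dmin)) * deriv (S i) q'
        < (1 + q / (((N : ℝ) - 1) * dmin)) * deriv (S i) q)
    (θ : Fin N → ℝ) (hp : 0 < price N dmin θ)
    (hconc : ∀ i, ConcaveOn ℝ Set.univ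
      (fun t => payoff N dmin S (Function.update θ i t) i))
    (hNash : ∀ (i : Fin N) (t : ℝ),
      -smax ≤ dmin + t / price N dmin (Function.update θ i t) →
      payoff N dmin S (Function.update θ i t) i ≤ payoff N dmin S θ i)
    (qt : Fin N → ℝ) (hq : ∀ i, qt i = dmin + θ i / price N dmin θ)
    (hfeas : ∀ i, -smax ≤ qt i)
    (hreg : ∀ i, -((N : ℝ) - 1) * dmin
        - deriv (S i) (qt i) / deriv (deriv (S i)) (qt i) ≤ qt i) :
    (∀ i, (-smax < qt i →
        deriv (S i) (qt i) * (1 + qt i / (((N : ℝ) - 1) * dmin)) = price N dmin θ) ∧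
      (qt i = -smax →
        deriv (S i) (qt i) * (1 + qt i / (((N : ℝ) - 1) * dmin)) ≤ price N dmin θ)) ∧
    (∑ i, qt i = 0) ∧
    (∀ q : Fin N → ℝ, (∑ i, q i = 0 ∧ ∀ i, -smax ≤ q i) → q ≠ qt →
      ∑ i, Stilde N dmin (S i) (q i) < ∑ i, Stilde N dmin (S i) (qt i)) :=
  stmt15_general N hN dmin smax hd S hC2 hmono hcond θ hp hNash qt hq hfeas
end
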